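/- arXiv:1602.08639 — 8 statements merged into one kernel-verified Lean document; each statement's English description precedes it below -/
import Mathlib

section
/- Let F be a set, let α, β, γ be equivalence relations on F with γ ⊆ α, and let x₀, x₁, x₂, x₃ ∈ F satisfy (x₀,x₃) ∈ α, (x₀,x₁) ∈ β, (x₂,x₃) ∈ β, (x₁,x₂) ∈ γ, and (x₀,x₃) ∉ (α ⊓ β) ⊔ γ. Then there exists a map c : F → {0,1,2,3} with c(xᵢ) = i for i = 0,1,2,3 such that (u,v) ∈ α implies (c(u),c(v)) ∈ α₀, (u,v) ∈ β implies (c(u),c(v)) ∈ β₀, and (u,v) ∈ γ implies (c(u),c(v)) ∈ γ₀. (This is the combinatorial content of the converse direction of the proposition that a variety has strongly P₀-colorable terms whenever it has no Day terms.) -/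
/-- The equivalence relation on {0,1,2,3} with classes {0,3} and {1,2}. -/
def alpha0 (u v : Fin 4) : Prop := (u = 0 ∨ u = 3) ↔ (v = 0 ∨ v = 3)

/-- The equivalence relation on {0,1,2,3} with classes {0,1} and {2,3}. -/
def beta0 (u v : Fin 4) : Prop := (u = 0 ∨ u = 1) ↔ (v = 0 ∨ v = 1)

/-- The equivalence relation on {0,1,2,3} with classes {0}, {1,2}, {3}. -/
def gamma0 (u v : Fin 4) : Prop := u = v ∨ (u = 1 ∧ v = 2) ∨ (u = 2 ∧ v = 1)

theorem stmt0 {F : Type*} (α β γ : F → F → Prop)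
    (hα : Equivalence α) (hβ : Equivalence β) (hγ : Equivalence γ)
    (hγα : ∀ u v, γ u v → α u v)
    (x0 x1 x2 x3 : F)
    (h03 : α x0 x3) (h01 : β x0 x1) (h23 : β x2 x3) (h12 : γ x1 x2)
    (hnot : ¬ Relation.EqvGen (fun u v => (α u v ∧ β u v) ∨ γ u v) x0 x3) :
    ∃ c : F → Fin 4,
      c x0 = 0 ∧ c x1 = 1 ∧ c x2 = 2 ∧ c x3 = 3 ∧
      (∀ u v, α u v → alpha0 (c u) (c v)) ∧
      (∀ u v, β u v → beta0 (c u) (c v)) ∧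
      (∀ u v, γ u v → gamma0 (c u) (c v)) := by
  classical
  set δ := Relation.EqvGen (fun u v => (α u v ∧ β u v) ∨ γ u v) with hδdef
  have hδα : ∀ u v, δ u v → α u v := by
    intro u v h
    induction h with
    | rel u v h => exact h.elim (·.1) (hγα u v)
    | refl u => exact hα.refl u
    | symm u v _ ih => exact hα.symm ih
    | trans u v w _ _ ih1 ih2 => exact hα.trans ih1 ih2
  have hδrel : ∀ u v, (α u v ∧ β u v) ∨ γ u v → δ u v := fun u v h =>
    Relation.EqvGen.rel u v h
  have hδtrans : ∀ {u v w}, δ u v → δ v w → δ u w := fun h1 h2 =>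
    Relation.EqvGen.trans _ _ _ h1 h2
  have hδsymm : ∀ {u v}, δ u v → δ v u := fun h => Relation.EqvGen.symm _ _ h
  have hδrefl : ∀ u, δ u u := fun u => Relation.EqvGen.refl u
  set A : F → Prop := fun u => α u x0 with hAdef
  set B : F → Prop := fun u => ∃ w, β u w ∧ δ w x0 with hBdef
  -- not α x1 x0
  have hA1 : ¬ A x1 := by
    intro h
    apply hnot
    have d01 : δ x0 x1 := hδrel _ _ (Or.inl ⟨hα.symm h, h01⟩)
    have d12 : δ x1 x2 := hδrel _ _ (Or.inr h12)
    have a23 : α x2 x3 := hα.trans (hα.symm (hγα _ _ h12)) (hα.trans h h03)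
    have d23 : δ x2 x3 := hδrel _ _ (Or.inl ⟨a23, h23⟩)
    exact hδtrans (hδtrans d01 d12) d23
  have hA2 : ¬ A x2 := fun h => hA1 (hα.trans (hγα _ _ h12) h)
  have hA0 : A x0 := hα.refl x0
  have hA3 : A x3 := hα.symm h03
  have hB0 : B x0 := ⟨x0, hβ.refl x0, hδrefl x0⟩
  have hB1 : B x1 := ⟨x0, hβ.symm h01, hδrefl x0⟩
  have hB3 : ¬ B x3 := by
    rintro ⟨w, hw1, hw2⟩
    apply hnot
    have aw3 : α w x3 := hα.trans (hδα _ _ hw2) h03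
    have d3w : δ x3 w := hδrel _ _ (Or.inl ⟨hα.symm aw3, hw1⟩)
    exact hδsymm (hδtrans d3w hw2)
  have hB2 : ¬ B x2 := by
    rintro ⟨w, hw1, hw2⟩
    exact hB3 ⟨w, hβ.trans (hβ.symm h23) hw1, hw2⟩
  -- key: for u in the α-class of x0, B u ↔ δ u x0
  have hkey : ∀ u, A u → (B u ↔ δ u x0) := by
    intro u hu
    constructor
    · rintro ⟨w, hw1, hw2⟩
      have auw : α u w := hα.trans hu (hα.symm (hδα _ _ hw2))
      exact hδtrans (hδrel _ _ (Or.inl ⟨auw, hw1⟩)) hw2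
    · intro h
      exact ⟨u, hβ.refl u, h⟩
  -- invariances
  have hAα : ∀ u v, α u v → (A u ↔ A v) :=
    fun u v h => ⟨fun h2 => hα.trans (hα.symm h) h2, fun h2 => hα.trans h h2⟩
  have hBβ : ∀ u v, β u v → (B u ↔ B v) := by
    intro u v h
    constructor
    · rintro ⟨w, hw1, hw2⟩; exact ⟨w, hβ.trans (hβ.symm h) hw1, hw2⟩
    · rintro ⟨w, hw1, hw2⟩; exact ⟨w, hβ.trans h hw1, hw2⟩
  have hBγ : ∀ u v, γ u v → A u → (B u ↔ B v) := by
    intro u v h hu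
    have hv : A v := hα.trans (hα.symm (hγα _ _ h)) hu
    rw [hkey u hu, hkey v hv]
    exact ⟨fun h2 => hδtrans (hδrel _ _ (Or.inr (hγ.symm h))) h2,
      fun h2 => hδtrans (hδrel _ _ (Or.inr h)) h2⟩
  set c : F → Fin 4 := fun u =>
    if A u then (if B u then 0 else 3) else (if B u then 1 else 2) with hcdef
  have hc0 : ∀ u, A u → B u → c u = 0 := fun u h1 h2 => by
    simp only [hcdef, if_pos h1, if_pos h2]
  have hc3 : ∀ u, A u → ¬ B u → c u = 3 := fun u h1 h2 => by
    simp only [hcdef, if_pos h1, if_neg h2]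
  have hc1 : ∀ u, ¬ A u → B u → c u = 1 := fun u h1 h2 => by
    simp only [hcdef, if_neg h1, if_pos h2]
  have hc2 : ∀ u, ¬ A u → ¬ B u → c u = 2 := fun u h1 h2 => by
    simp only [hcdef, if_neg h1, if_neg h2]
  have hmemA : ∀ u, (c u = 0 ∨ c u = 3) ↔ A u := by
    intro u
    by_cases h1 : A u <;> by_cases h2 : B u
    · rw [hc0 u h1 h2]; simp [h1]
    · rw [hc3 u h1 h2]; simp [h1]
    · rw [hc1 u h1 h2]; simp [h1]
    · rw [hc2 u h1 h2]; simp [h1]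
  have hmemB : ∀ u, (c u = 0 ∨ c u = 1) ↔ B u := by
    intro u
    by_cases h1 : A u <;> by_cases h2 : B u
    · rw [hc0 u h1 h2]; simp [h2]
    · rw [hc3 u h1 h2]; simp [h2]
    · rw [hc1 u h1 h2]; simp [h2]
    · rw [hc2 u h1 h2]; simp [h2]
  refine ⟨c, hc0 x0 hA0 hB0, hc1 x1 hA1 hB1, hc2 x2 hA2 hB2, hc3 x3 hA3 hB3, ?_, ?_, ?_⟩
  · intro u v h
    unfold alpha0
    rw [hmemA u, hmemA v]
    exact hAα u v h
  · intro u v h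
    unfold beta0
    rw [hmemB u, hmemB v]
    exact hBβ u v h
  · intro u v h
    have h1 := hAα u v (hγα u v h)
    unfold gamma0
    by_cases hu : A u
    · have hv : A v := h1.mp hu
      have h2 := hBγ u v h hu
      left
      by_cases hbu : B u
      · rw [hc0 u hu hbu, hc0 v hv (h2.mp hbu)]
      · rw [hc3 u hu hbu, hc3 v hv (fun hb => hbu (h2.mpr hb))]
    · have hv : ¬ A v := fun hv => hu (h1.mpr hv)
      by_cases hbu : B u <;> by_cases hbv : B v
      · left; rw [hc1 u hu hbu, hc1 v hv hbv]
      · right; left; rw [hc1 u hu hbu, hc2 v hv hbv]; exact ⟨rfl, rfl⟩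
      · right; right; rw [hc2 u hu hbu, hc1 v hv hbv]; exact ⟨rfl, rfl⟩
      · left; rw [hc2 u hu hbu, hc2 v hv hbv]
end

section
/- Let K be a set, U ⊆ K, and let γ_U be the equivalence relation on K × K given by ((a,b),(a',b')) ∈ γ_U iff a = a' and (a ∈ U or b = b'). Fix k ≥ 1, let f¹, f² : Kᵏ → K, and let f : (K × K)ᵏ → K × K be defined componentwise: f((a₁,b₁),…,(a_k,b_k)) = (f¹(a₁,…,a_k), f²(b₁,…,b_k)). Then f preserves γ_U if and only if: for every a = (a₁,…,a_k) ∈ Kᵏ with f¹(a) ∉ U and all b, b' ∈ Kᵏ, if bᵢ = b'ᵢ for every index i with aᵢ ∉ U, then f²(b) = f²(b'). (Equivalently, whenever f¹(a) ∉ U, the function f² does not depend on any coordinate i with aᵢ ∈ U.) -/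
/-- The relation `γ_U` on `K × K`: `((a,b),(a',b')) ∈ γ_U` iff `a = a'` and
(`a ∈ U` or `b = b'`). -/
def gammaU {K : Type*} (U : Set K) (x y : K × K) : Prop :=
  x.1 = y.1 ∧ (x.1 ∈ U ∨ x.2 = y.2)

theorem stmt2 {K : Type*} (U : Set K) (k : ℕ) (hk : 1 ≤ k)
    (f1 f2 : (Fin k → K) → K) :
    (∀ p q : Fin k → K × K, (∀ i, gammaU U (p i) (q i)) →
        gammaU U (f1 fun i => (p i).1, f2 fun i => (p i).2)
                 (f1 fun i => (q i).1, f2 fun i => (q i).2)) ↔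
    (∀ a : Fin k → K, f1 a ∉ U →
      ∀ b b' : Fin k → K, (∀ i, a i ∉ U → b i = b' i) → f2 b = f2 b') := by
  constructor
  · intro h a ha b b' hbb
    have := h (fun i => (a i, b i)) (fun i => (a i, b' i)) (fun i => by
      refine ⟨rfl, ?_⟩
      by_cases hi : a i ∈ U
      · exact Or.inl hi
      · exact Or.inr (hbb i hi))
    rcases this.2 with h1 | h2
    · exact absurd h1 ha
    · exact h2
  · intro h p q hpq
    have hfst : (fun i => (p i).1) = fun i => (q i).1 := funext fun i => (hpq i).1
    refine ⟨by rw [hfst], ?_⟩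
    by_cases hu : f1 (fun i => (p i).1) ∈ U
    · exact Or.inl hu
    · exact Or.inr (h _ hu _ _ fun i hi => (hpq i).2.resolve_left hi)
end

section
/- Let K be a set, U ⊆ K, and let I be an index set admitting an injection into U. On P = K × K let α and β be the kernels of the first and second projections, and let γ_U = {((a,b),(a',b')) : a = a' and (a ∈ U or b = b')}. Then there exist idempotent binary operations f_i (i ∈ I) and idempotent ternary operations p_{i,j}, q_{i,j}, r_{i,j} (i, j ∈ I, i ≠ j) on P, each preserving α, β and γ_U, such that for all x, y ∈ P and all i ≠ j: p_{i,j}(x, f_j(x,y), y) = x; p_{i,j}(x, f_i(x,y), y) = q_{i,j}(x, f_j(x,y), y); q_{i,j}(x, f_i(x,y), y) = r_{i,j}(x, f_j(x,y), y); r_{i,j}(x, f_i(x,y), y) = y; and f_i(x,x) = x. (This is the satisfiability half of the proposition that the idempotent reducts of the clones of the pentagons P_κ form a strictly increasing chain.) -/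
/-- Kernel of the first projection on a product. -/
def kerFst {A B : Type*} (x y : A × B) : Prop := x.1 = y.1

/-- Kernel of the second projection on a product. -/
def kerSnd {A B : Type*} (x y : A × B) : Prop := x.2 = y.2

/-- A binary operation preserves a binary relation. -/
def Preserves2 {A : Type*} (R : A → A → Prop) (f : A → A → A) : Prop :=
  ∀ x x' y y', R x x' → R y y' → R (f x y) (f x' y')

/-- A ternary operation preserves a binary relation. -/
def Preserves3 {A : Type*} (R : A → A → Prop) (f : A → A → A → A) : Prop :=
  ∀ x x' y y' z z', R x x' → R y y' → R z z' → R (f x y z) (f x' y' z')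

theorem stmt3 {K I : Type*} (U : Set K) (ι : I → K)
    (hinj : Function.Injective ι) (hmem : ∀ i, ι i ∈ U) :
    ∃ (f : I → K × K → K × K → K × K)
      (p q r : I → I → K × K → K × K → K × K → K × K),
      (∀ i x, f i x x = x) ∧
      (∀ i j, i ≠ j → ∀ x, p i j x x x = x) ∧
      (∀ i j, i ≠ j → ∀ x, q i j x x x = x) ∧
      (∀ i j, i ≠ j → ∀ x, r i j x x x = x) ∧
      (∀ i, Preserves2 kerFst (f i) ∧ Preserves2 kerSnd (f i) ∧
        Preserves2 (gammaU U) (f i)) ∧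
      (∀ i j, i ≠ j → Preserves3 kerFst (p i j) ∧ Preserves3 kerSnd (p i j) ∧
        Preserves3 (gammaU U) (p i j)) ∧
      (∀ i j, i ≠ j → Preserves3 kerFst (q i j) ∧ Preserves3 kerSnd (q i j) ∧
        Preserves3 (gammaU U) (q i j)) ∧
      (∀ i j, i ≠ j → Preserves3 kerFst (r i j) ∧ Preserves3 kerSnd (r i j) ∧
        Preserves3 (gammaU U) (r i j)) ∧
      (∀ i j, i ≠ j → ∀ x y, p i j x (f j x y) y = x) ∧
      (∀ i j, i ≠ j → ∀ x y, p i j x (f i x y) y = q i j x (f j x y) y) ∧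
      (∀ i j, i ≠ j → ∀ x y, q i j x (f i x y) y = r i j x (f j x y) y) ∧
      (∀ i j, i ≠ j → ∀ x y, r i j x (f i x y) y = y) := by
  classical
  refine ⟨
    fun i x y => (if x.1 = y.1 then x.1 else ι i, if x.2 = y.2 then x.2 else ι i),
    fun i j x m y => ((if m.1 = ι i then ι i else x.1), x.2),
    fun i j x m y => ((if x.1 = y.1 then (if m.1 ∈ U then m.1 else x.1)
      else (if m.1 = ι j then ι i else if m.1 = ι i then ι j else
        if m.1 ∈ U then ι i else if y.1 ∈ U then ι i else x.1)),
      (if m.2 = ι i then y.2 else x.2)),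
    fun i j x m y => ((if m.1 = ι j then ι j else y.1), y.2),
    ?_, ?_, ?_, ?_, ?_, ?_, ?_, ?_, ?_, ?_, ?_, ?_⟩
  · intro i ⟨a, b⟩
    simp
  · intro i j h ⟨a, b⟩
    dsimp only
    split_ifs with h1 <;> simp_all
  · intro i j h ⟨a, b⟩
    dsimp only
    split_ifs <;> simp_all
  · intro i j h ⟨a, b⟩
    dsimp only
    split_ifs with h1 <;> simp_all
  · intro i
    refine ⟨?_, ?_, ?_⟩
    · intro x x' y y' hx hy
      simp only [kerFst] at *
      simp [hx, hy]
    · intro x x' y y' hx hy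
      simp only [kerSnd] at *
      simp [hx, hy]
    · rintro ⟨a, b⟩ ⟨a', b'⟩ ⟨e, k⟩ ⟨e', k'⟩ ⟨hx1, hx2⟩ ⟨hy1, hy2⟩
      simp only at hx1 hx2 hy1 hy2
      subst hx1 hy1
      refine ⟨rfl, ?_⟩
      dsimp only
      by_cases hae : a = e
      · simp only [if_pos hae]
        by_cases hau : a ∈ U
        · exact Or.inl hau
        · have hb : b = b' := hx2.resolve_left hau
          have hk : k = k' := hy2.resolve_left (hae ▸ hau)
          subst hb hk
          exact Or.inr rfl
      · simp only [if_neg hae]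
        exact Or.inl (hmem i)
  · intro i j hij
    refine ⟨?_, ?_, ?_⟩
    · rintro x x' m m' y y' hx hm hy
      simp only [kerFst] at *
      simp [hx, hm, hy]
    · rintro x x' m m' y y' hx hm hy
      simp only [kerSnd] at *
      simp [hx, hm, hy]
    · rintro x x' m m' y y' ⟨hx1, hx2⟩ ⟨hm1, hm2⟩ ⟨hy1, hy2⟩
      refine ⟨by simp [hx1, hm1], ?_⟩
      simp only [hm1]
      split_ifs with h1
      · exact Or.inl (hmem i)
      · rcases hx2 with h | h
        · exact Or.inl h
        · exact Or.inr h
  · intro i j hij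
    have hii : ι i ≠ ι j := fun h => hij (hinj h)
    refine ⟨?_, ?_, ?_⟩
    · rintro x x' m m' y y' hx hm hy
      simp only [kerFst] at *
      simp [hx, hm, hy]
    · rintro x x' m m' y y' hx hm hy
      simp only [kerSnd] at *
      simp [hx, hm, hy]
    · rintro ⟨a, b⟩ ⟨a', b'⟩ ⟨c, d⟩ ⟨c', d'⟩ ⟨e, k⟩ ⟨e', k'⟩ ⟨hx1, hx2⟩ ⟨hm1, hm2⟩ ⟨hy1, hy2⟩
      simp only at hx1 hx2 hm1 hm2 hy1 hy2
      subst hx1; subst hm1; subst hy1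
      refine ⟨rfl, ?_⟩
      dsimp only
      by_cases hae : a = e
      · simp only [if_pos hae]
        by_cases hcu : c ∈ U
        · rw [if_pos hcu]; exact Or.inl hcu
        · rw [if_neg hcu]
          by_cases hau : a ∈ U
          · exact Or.inl hau
          · have hb : b = b' := hx2.resolve_left hau
            have hd : d = d' := hm2.resolve_left hcu
            have hk : k = k' := hy2.resolve_left (hae ▸ hau)
            subst hb; subst hd; subst hk
            exact Or.inr rfl
      · simp only [if_neg hae]
        by_cases h1 : c = ι j
        · rw [if_pos h1]; exact Or.inl (hmem i)
        rw [if_neg h1]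
        by_cases h2 : c = ι i
        · rw [if_pos h2]; exact Or.inl (hmem j)
        rw [if_neg h2]
        by_cases h3 : c ∈ U
        · rw [if_pos h3]; exact Or.inl (hmem i)
        rw [if_neg h3]
        by_cases h4 : e ∈ U
        · rw [if_pos h4]; exact Or.inl (hmem i)
        rw [if_neg h4]
        by_cases hau : a ∈ U
        · exact Or.inl hau
        · have hb : b = b' := hx2.resolve_left hau
          have hd : d = d' := hm2.resolve_left h3
          have hk : k = k' := hy2.resolve_left h4
          subst hb; subst hd; subst hk
          exact Or.inr rfl
  · intro i j hij
    refine ⟨?_, ?_, ?_⟩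
    · rintro x x' m m' y y' hx hm hy
      simp only [kerFst] at *
      simp [hx, hm, hy]
    · rintro x x' m m' y y' hx hm hy
      simp only [kerSnd] at *
      simp [hx, hm, hy]
    · rintro x x' m m' y y' ⟨hx1, hx2⟩ ⟨hm1, hm2⟩ ⟨hy1, hy2⟩
      refine ⟨by simp [hm1, hy1], ?_⟩
      simp only [hm1, hy1]
      split_ifs with h1
      · exact Or.inl (hmem j)
      · rcases hy2 with h | h
        · exact Or.inl (hy1 ▸ h)
        · exact Or.inr h
  · intro i j hij
    have hii : ι i ≠ ι j := fun h => hij (hinj h)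
    have hii' : ι j ≠ ι i := hii.symm
    intro ⟨a, b⟩ ⟨e, k⟩
    by_cases hae : a = e <;> by_cases hbk : b = k <;>
      simp_all <;> split_ifs <;> simp_all
  · intro i j hij
    have hii : ι i ≠ ι j := fun h => hij (hinj h)
    have hii' : ι j ≠ ι i := hii.symm
    intro ⟨a, b⟩ ⟨e, k⟩
    by_cases hae : a = e <;> by_cases hbk : b = k <;>
      simp_all <;> split_ifs <;> simp_all
  · intro i j hij
    have hii : ι i ≠ ι j := fun h => hij (hinj h)
    have hii' : ι j ≠ ι i := hii.symm
    intro ⟨a, b⟩ ⟨e, k⟩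
    by_cases hae : a = e <;> by_cases hbk : b = k <;>
      simp_all <;> split_ifs <;> simp_all
  · intro i j hij
    have hii : ι i ≠ ι j := fun h => hij (hinj h)
    have hii' : ι j ≠ ι i := hii.symm
    intro ⟨a, b⟩ ⟨e, k⟩
    by_cases hae : a = e <;> by_cases hbk : b = k <;>
      simp_all <;> split_ifs <;> simp_all
end

section
/- Let A be a set, let a, b ∈ A with a ≠ b, let I be an index set, and suppose given binary operations f_i : A² → A (i ∈ I) and ternary operations p_{i,j}, q_{i,j}, r_{i,j} : A³ → A (i, j ∈ I, i ≠ j) such that for all x, y ∈ A and all i ≠ j: p_{i,j}(x, f_j(x,y), y) = x; p_{i,j}(x, f_i(x,y), y) = q_{i,j}(x, f_j(x,y), y); q_{i,j}(x, f_i(x,y), y) = r_{i,j}(x, f_j(x,y), y); and r_{i,j}(x, f_i(x,y), y) = y. Then the map I → A sending i to f_i(a,b) is injective. In particular, any set of cardinality at least 2 carrying such operations has cardinality at least |I|. -/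
universe u v

theorem stmt4 {A : Type u} {I : Type v} (a b : A) (hab : a ≠ b)
    (f : I → A → A → A) (p q r : I → I → A → A → A → A)
    (h1 : ∀ i j, i ≠ j → ∀ x y, p i j x (f j x y) y = x)
    (h2 : ∀ i j, i ≠ j → ∀ x y, p i j x (f i x y) y = q i j x (f j x y) y)
    (h3 : ∀ i j, i ≠ j → ∀ x y, q i j x (f i x y) y = r i j x (f j x y) y)
    (h4 : ∀ i j, i ≠ j → ∀ x y, r i j x (f i x y) y = y) :
    Function.Injective (fun i => f i a b) ∧
    Cardinal.lift.{u} (Cardinal.mk I) ≤ Cardinal.lift.{v} (Cardinal.mk A) := by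
  have hinj : Function.Injective (fun i => f i a b) := by
    intro i j hfe
    by_contra hij
    simp only at hfe
    apply hab
    calc a = p i j a (f j a b) b := (h1 i j hij a b).symm
      _ = p i j a (f i a b) b := by rw [hfe]
      _ = q i j a (f j a b) b := h2 i j hij a b
      _ = q i j a (f i a b) b := by rw [hfe]
      _ = r i j a (f j a b) b := h3 i j hij a b
      _ = r i j a (f i a b) b := by rw [hfe]
      _ = b := h4 i j hij a b
  exact ⟨hinj, Cardinal.lift_mk_le'.mpr ⟨⟨_, hinj⟩⟩⟩
end

section
/- Fix n ≥ 2. Let C₁,…,Cₙ be sets, and for each i let Uᵢ ⊆ Cᵢ with elements aᵢ ∈ Uᵢ and bᵢ ∈ Cᵢ ∖ Uᵢ. Let R = {(c₁,…,cₙ) ∈ C₁ × ⋯ × Cₙ : cᵢ ∈ Uᵢ for some i} (an n-cross relation). Index the 2ⁿ−1 arguments of a (2ⁿ−1)-ary function by the nonzero 0–1 vectors ε of length n, and suppose that for each i there is a function tᵢ : Cᵢ^{2ⁿ−1} → Cᵢ satisfying the n-cube identities: for every coordinate j ∈ {1,…,n} and all x, y ∈ Cᵢ, tᵢ(ε ↦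 (y if ε_j = 1, else x)) = x. Then each of the 2ⁿ−1 tuples w_ε := (i ↦ aᵢ if ε_i = 1, else bᵢ) lies in R, while applying the tᵢ coordinatewise to the family (w_ε)_ε yields the tuple (b₁,…,bₙ) ∉ R. Hence the componentwise operation (t₁,…,tₙ) on C₁ × ⋯ × Cₙ does not preserve R: no variety with an n-cube term contains an algebra compatible with an n-cross. -/
theorem stmt5 (n : ℕ) (hn : 2 ≤ n) (C : Fin n → Type*) (U : ∀ i, Set (C i))
    (a b : ∀ i, C i) (ha : ∀ i, a i ∈ U i) (hb : ∀ i, b i ∉ U i)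
    (t : ∀ i, ({ε : Fin n → Bool // ε ≠ fun _ => false} → C i) → C i)
    (ht : ∀ (i : Fin n) (j : Fin n) (x y : C i),
      t i (fun ε => if ε.1 j then y else x) = x) :
    (∀ ε : {ε : Fin n → Bool // ε ≠ fun _ => false},
        (fun i => if ε.1 i then a i else b i) ∈
          {c : ∀ i, C i | ∃ i, c i ∈ U i}) ∧
    (fun i => t i fun ε => if ε.1 i then a i else b i) = b ∧
    b ∉ {c : ∀ i, C i | ∃ i, c i ∈ U i} := by
  refine ⟨?_, ?_, ?_⟩
  · rintro ⟨ε, hε⟩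
    have : ∃ j, ε j = true := by
      by_contra h
      push_neg at h
      exact hε (funext fun j => by simpa using h j)
    obtain ⟨j, hj⟩ := this
    exact ⟨j, by simp [hj, ha j]⟩
  · funext i
    exact ht i i (b i) (a i)
  · rintro ⟨i, hi⟩
    exact hb i hi
end

section
/- Let K be a set, U ⊆ K nonempty, and let I be an index set admitting an injection into U. For each k ≥ 1 let R_k = {(x₁,…,x_k) ∈ Kᵏ : xₗ ∈ U for some l}. Then there exist idempotent binary operations f_i (i ∈ I) and idempotent ternary operations p_{i,j}, q_{i,j} (i, j ∈ I, i ≠ j) on K, each preserving R_k for every k ≥ 1, such that for all x, y ∈ K and all i ≠ j: p_{i,j}(x, f_j(x,y), y) = x; p_{i,j}(x, f_i(x,y), y) = q_{i,j}(x, f_j(x,y), y); q_{i,j}(x, f_i(x,y), y) = y; and f_i(x,x) = x. (This is the satisfiability half of the lemma that the idempotent reduct of the polymorphism clone of the cube term blocker B_κ has no action on any set of cardinality strictly between 1 and κ.) -/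
/-- The k-ary cross relation determined by a subset `U`:
tuples having at least one coordinate in `U`. -/
def Rk {K : Type*} (U : Set K) (k : ℕ) : Set (Fin k → K) := {x | ∃ l, x l ∈ U}

theorem stmt6 {K I : Type*} (U : Set K) (hU : U.Nonempty)
    (ι : I → K) (hinj : Function.Injective ι) (hmem : ∀ i, ι i ∈ U) :
    ∃ (f : I → K → K → K) (p q : I → I → K → K → K → K),
      (∀ i x, f i x x = x) ∧
      (∀ i j, i ≠ j → ∀ x, p i j x x x = x) ∧
      (∀ i j, i ≠ j → ∀ x, q i j x x x = x) ∧
      (∀ (i : I) (k : ℕ), 1 ≤ k → ∀ r s : Fin k → K,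
        r ∈ Rk U k → s ∈ Rk U k → (fun l => f i (r l) (s l)) ∈ Rk U k) ∧
      (∀ i j, i ≠ j → ∀ (k : ℕ), 1 ≤ k → ∀ r s u : Fin k → K,
        r ∈ Rk U k → s ∈ Rk U k → u ∈ Rk U k →
          (fun l => p i j (r l) (s l) (u l)) ∈ Rk U k) ∧
      (∀ i j, i ≠ j → ∀ (k : ℕ), 1 ≤ k → ∀ r s u : Fin k → K,
        r ∈ Rk U k → s ∈ Rk U k → u ∈ Rk U k →
          (fun l => q i j (r l) (s l) (u l)) ∈ Rk U k) ∧
      (∀ i j, i ≠ j → ∀ x y, p i j x (f j x y) y = x) ∧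
      (∀ i j, i ≠ j → ∀ x y, p i j x (f i x y) y = q i j x (f j x y) y) ∧
      (∀ i j, i ≠ j → ∀ x y, q i j x (f i x y) y = y) := by
  classical
  refine ⟨fun i x y => if x = y then x else ι i,
    fun i _ x m _ => if m = ι i then ι i else x,
    fun i j x m y => if x = y then x else if m = ι j then ι i else y,
    ?_, ?_, ?_, ?_, ?_, ?_, ?_, ?_, ?_⟩
  · intro i x; simp
  · intro i j _ x
    by_cases h : x = ι i <;> simp [h]
  · intro i j _ x; simp
  · intro i k _ r s ⟨l, hl⟩ _
    refine ⟨l, ?_⟩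
    by_cases h : r l = s l
    · simpa [h] using h ▸ hl
    · simp [h, hmem]
  · intro i j _ k _ r s u ⟨l, hl⟩ _ _
    refine ⟨l, ?_⟩
    by_cases h : s l = ι i <;> simp [h, hl, hmem]
  · intro i j _ k _ r s u _ _ ⟨l, hl⟩
    refine ⟨l, ?_⟩
    by_cases h : r l = u l
    · simp [h, hl]
    · by_cases h2 : s l = ι j <;> simp [h, h2, hl, hmem]
  · intro i j hij x y
    by_cases h : x = y
    · subst h
      by_cases h2 : x = ι i <;> simp [h2]
    · have : ι j ≠ ι i := fun he => hij (hinj he).symm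
      simp [h, this]
  · intro i j hij x y
    by_cases h : x = y
    · subst h
      by_cases h2 : x = ι i <;> simp [h2]
    · simp [h]
  · intro i j hij x y
    by_cases h : x = y
    · simp [h]
    · have : ι i ≠ ι j := fun he => hij (hinj he)
      simp [h, this]
end

section
/- Let A be a set, let a, b ∈ A with a ≠ b, let I be an index set, and suppose given binary operations f_i : A² → A (i ∈ I) and ternary operations p_{i,j}, q_{i,j} : A³ → A (i, j ∈ I, i ≠ j) such that for all x, y ∈ A and all i ≠ j: p_{i,j}(x, f_j(x,y), y) = x; p_{i,j}(x, f_i(x,y), y) = q_{i,j}(x, f_j(x,y), y); and q_{i,j}(x, f_i(x,y), y) = y. Then the map I → A sending i to f_i(a,b) is injective. In particular, any set of cardinality at least 2 carrying such operations has cardinality at least |I|. -/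
universe u v

theorem stmt7 {A : Type u} {I : Type v} (a b : A) (hab : a ≠ b)
    (f : I → A → A → A) (p q : I → I → A → A → A → A)
    (h1 : ∀ i j, i ≠ j → ∀ x y, p i j x (f j x y) y = x)
    (h2 : ∀ i j, i ≠ j → ∀ x y, p i j x (f i x y) y = q i j x (f j x y) y)
    (h3 : ∀ i j, i ≠ j → ∀ x y, q i j x (f i x y) y = y) :
    Function.Injective (fun i => f i a b) ∧
    Cardinal.lift.{u} (Cardinal.mk I) ≤ Cardinal.lift.{v} (Cardinal.mk A) := by
  have hinj : Function.Injective (fun i => f i a b) := by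
    intro i j h
    by_contra hij
    simp only at h
    apply hab
    calc a = p i j a (f j a b) b := (h1 i j hij a b).symm
    _ = p i j a (f i a b) b := by rw [h]
    _ = q i j a (f j a b) b := h2 i j hij a b
    _ = q i j a (f i a b) b := by rw [h]
    _ = b := h3 i j hij a b
  exact ⟨hinj, Cardinal.lift_mk_le.{0}.2 ⟨⟨_, hinj⟩⟩⟩
end

section
/- Fix n ≥ 2. On the set {0,1,…,n} let α be the equivalence relation generated by the pairs (i, i+1) for even i (partition 01|23|…) and β the equivalence relation generated by the pairs (i, i+1) for odd i (partition 0|12|34|…). Then (0, n) ∈ α ∘ₙ β but (0, n) ∉ β ∘ₙ α, where ρ ∘ₙ σ denotes the alternating composition ρ ∘ σ ∘ ρ ∘ ⋯ with n factors. In particular the two equivalence relations of the structure Wₙ do not n-permute: α ∘ₙ β ≠ β ∘ₙ α. -/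
/-- `altComp ρ σ n` is the alternating composition `ρ ∘ σ ∘ ρ ∘ ⋯` with `n` factors. -/
def altComp {X : Type*} (ρ σ : X → X → Prop) : ℕ → X → X → Prop
  | 0, x, z => x = z
  | m + 1, x, z => ∃ y, ρ x y ∧ altComp σ ρ m y z

private lemma auxA {N : ℕ} {u v : Fin N}
    (h : Relation.EqvGen (fun u v : Fin N => (u : ℕ) % 2 = 0 ∧ (v : ℕ) = (u : ℕ) + 1) u v) :
    (u : ℕ) / 2 = (v : ℕ) / 2 := by
  induction h with
  | rel a b hab => obtain ⟨h1, h2⟩ := hab; omega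
  | refl => rfl
  | symm a b h ih => omega
  | trans a b c h1 h2 ih1 ih2 => omega

private lemma auxB {N : ℕ} {u v : Fin N}
    (h : Relation.EqvGen (fun u v : Fin N => (u : ℕ) % 2 = 1 ∧ (v : ℕ) = (u : ℕ) + 1) u v) :
    ((u : ℕ) + 1) / 2 = ((v : ℕ) + 1) / 2 := by
  induction h with
  | rel a b hab => obtain ⟨h1, h2⟩ := hab; omega
  | refl => rfl
  | symm a b h ih => omega
  | trans a b c h1 h2 ih1 ih2 => omega

private lemma altComp_le {N : ℕ} : ∀ (m : ℕ) (ρ σ : Fin N → Fin N → Prop),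
    (∀ u v, ρ u v → (v : ℕ) ≤ (u : ℕ) + 1) →
    (∀ u v, σ u v → (v : ℕ) ≤ (u : ℕ) + 1) →
    ∀ x z : Fin N, altComp ρ σ m x z → (z : ℕ) ≤ (x : ℕ) + m := by
  intro m
  induction m with
  | zero =>
    intro ρ σ _ _ x z h
    have hxz : x = z := h
    subst hxz
    omega
  | succ m ih =>
    intro ρ σ hρ hσ x z h
    obtain ⟨y, hxy, hyz⟩ := h
    have h1 := hρ _ _ hxy
    have h2 := ih σ ρ hσ hρ y z hyz
    omega

private lemma altComp_chain {N : ℕ} : ∀ (m : ℕ) (ρ σ : Fin N → Fin N → Prop),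
    (∀ u v : Fin N, (u : ℕ) % 2 = 0 → (v : ℕ) = (u : ℕ) + 1 → ρ u v) →
    (∀ u v : Fin N, (u : ℕ) % 2 = 1 → (v : ℕ) = (u : ℕ) + 1 → σ u v) →
    ∀ x z : Fin N, (z : ℕ) = (x : ℕ) + m →
      (((x : ℕ) % 2 = 0 → altComp ρ σ m x z) ∧ ((x : ℕ) % 2 = 1 → altComp σ ρ m x z)) := by
  intro m
  induction m with
  | zero =>
    intro ρ σ _ _ x z hz
    have hxz : x = z := Fin.ext (by omega)
    exact ⟨fun _ => hxz, fun _ => hxz⟩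
  | succ m ih =>
    intro ρ σ hρ hσ x z hz
    have hzlt : (z : ℕ) < N := z.isLt
    have hylt : (x : ℕ) + 1 < N := by omega
    refine ⟨fun hx => ?_, fun hx => ?_⟩
    · refine ⟨⟨(x : ℕ) + 1, hylt⟩, hρ x _ hx rfl, ?_⟩
      exact (ih ρ σ hρ hσ ⟨(x : ℕ) + 1, hylt⟩ z (by simp only [Fin.val_mk]; omega)).2
        (by simp only [Fin.val_mk]; omega)
    · refine ⟨⟨(x : ℕ) + 1, hylt⟩, hσ x _ hx rfl, ?_⟩
      exact (ih ρ σ hρ hσ ⟨(x : ℕ) + 1, hylt⟩ z (by simp only [Fin.val_mk]; omega)).1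
        (by simp only [Fin.val_mk]; omega)

private lemma altComp_first {X : Type*} (ρ σ : X → X → Prop) (m : ℕ) (hm : m ≠ 0)
    (x z : X) (h : altComp ρ σ m x z) : ∃ y, ρ x y ∧ altComp σ ρ (m - 1) y z := by
  cases m with
  | zero => exact absurd rfl hm
  | succ k => exact h

theorem stmt13 (n : ℕ) (hn : 2 ≤ n) :
    -- α: the equivalence relation generated by the pairs (i, i+1) for even i
    let α := Relation.EqvGen
      (fun u v : Fin (n + 1) => (u : ℕ) % 2 = 0 ∧ (v : ℕ) = (u : ℕ) + 1)
    -- β: the equivalence relation generated by the pairs (i, i+1) for odd i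
    let β := Relation.EqvGen
      (fun u v : Fin (n + 1) => (u : ℕ) % 2 = 1 ∧ (v : ℕ) = (u : ℕ) + 1)
    altComp α β n 0 (Fin.last n) ∧
    ¬ altComp β α n 0 (Fin.last n) ∧
    altComp α β n ≠ altComp β α n := by
  intro α β
  have hA : ∀ u v : Fin (n + 1), α u v → (u : ℕ) / 2 = (v : ℕ) / 2 := fun u v h => auxA h
  have hB : ∀ u v : Fin (n + 1), β u v → ((u : ℕ) + 1) / 2 = ((v : ℕ) + 1) / 2 :=
    fun u v h => auxB h
  have hαstep : ∀ u v : Fin (n + 1), α u v → (v : ℕ) ≤ (u : ℕ) + 1 := by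
    intro u v h; have := hA u v h; omega
  have hβstep : ∀ u v : Fin (n + 1), β u v → (v : ℕ) ≤ (u : ℕ) + 1 := by
    intro u v h; have := hB u v h; omega
  have hpos : altComp α β n 0 (Fin.last n) :=
    (altComp_chain n α β
      (fun u v h1 h2 => Relation.EqvGen.rel u v ⟨h1, h2⟩)
      (fun u v h1 h2 => Relation.EqvGen.rel u v ⟨h1, h2⟩)
      0 (Fin.last n)
      (by simp only [Fin.val_last, Fin.val_zero]; omega)).1
      (by simp only [Fin.val_zero])
  have hneg : ¬ altComp β α n 0 (Fin.last n) := by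
    intro h
    obtain ⟨y, h0y, hrest⟩ := altComp_first β α n (by omega) _ _ h
    have hy0 : (y : ℕ) = 0 := by
      have := hB _ _ h0y
      simp only [Fin.val_zero] at this
      omega
    have hb := altComp_le (n - 1) α β hαstep hβstep y (Fin.last n) hrest
    simp only [Fin.val_last] at hb
    omega
  exact ⟨hpos, hneg, fun heq => hneg (heq ▸ hpos)⟩
end
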